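/- arXiv:2202.01345 — 3 statements merged into one kernel-verified Lean document; each statement's English description precedes it below -/
import Mathlib

section
/- Let m ∈ 𝓜. Then for every integer k ≥ 2 the function G^k_m(x) is finite for every x ≥ 0; moreover, for every integer k ≥ 1, the function (−1)^k G^k_m is finite, nonnegative and nondecreasing on [0,1]. -/
open MeasureTheory Filter Topology Set
open scoped ENNReal NNReal

structure MString where
  m : ℝ → ℝ
  strict_mono : StrictMonoOn m (Set.Ioi 0)
  right_cont : ∀ x : ℝ, 0 < x → ContinuousWithinAt m (Set.Ici x) x
  μ : Measure ℝ
  stieltjes : ∀ a b : ℝ, 0 < a → a ≤ b → μ (Set.Ioc a b) = ENNReal.ofReal (m b - m a)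
  int_fin : ∫⁻ x in Set.Ioc (0:ℝ) 1, ENNReal.ofReal x ∂μ < ⊤

namespace MString

noncomputable def F (S : MString) (x : ℝ) : ℝ := ∫ y in Set.Ioc (0:ℝ) x, y ∂S.μ

noncomputable def E (S : MString) (d : ℕ) (lam x : ℝ) : ℝ :=
  (1 / (d.factorial : ℝ)) * (S.F x) ^ d * Real.exp (lam * S.F x)

noncomputable def sBul (f : ℝ → ℝ) (x : ℝ) : ℝ := ∫ y in (0:ℝ)..x, f y

noncomputable def mBul (S : MString) (f : ℝ → ℝ) (x : ℝ) : ℝ :=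
  ∫ y in Set.Ioc (0:ℝ) x, f y ∂S.μ

noncomputable def smIter (S : MString) : ℕ → (ℝ → ℝ) → ℝ → ℝ
  | 0, f => f
  | (k+1), f => sBul (mBul S (smIter S k f))

noncomputable def msIter (S : MString) : ℕ → (ℝ → ℝ) → ℝ → ℝ
  | 0, f => f
  | (k+1), f => mBul S (sBul (msIter S k f))

noncomputable def psi (S : MString) (lam x : ℝ) : ℝ :=
  ∑' k : ℕ, lam ^ k * smIter S k id x

noncomputable def psiPlus (S : MString) (lam x : ℝ) : ℝ :=
  1 + ∑' k : ℕ, lam ^ (k + 1) * mBul S (smIter S k id) x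

noncomputable def g (S : MString) (lam x : ℝ) : ℝ :=
  psi S lam x * ∫ y in Set.Ioi x, (psi S lam y ^ 2)⁻¹

noncomputable def mtilde (S : MString) (x : ℝ) : ℝ := S.m x - S.m 1

noncomputable def jInt (S : MString) (f : ℝ → ℝ) (y : ℝ) : ℝ :=
  if y ≤ 1 then ∫ z in Set.Ioc y 1, f z ∂S.μ else - ∫ z in Set.Ioc 1 y, f z ∂S.μ

noncomputable def G (S : MString) : ℕ → ℝ → ℝ
  | 0 => fun _ => 0
  | 1 => fun x => ∫ y in (0:ℝ)..x, mtilde S y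
  | (k+2) => fun x => - ∫ y in (0:ℝ)..x, jInt S (G S (k+1)) y

noncomputable def GBig (S : MString) (x : ℝ) : ℝ := ∫ y in (0:ℝ)..x, S.m y

noncomputable def intGdm (S : MString) (k : ℕ) : ℝ≥0∞ :=
  ∫⁻ x in Set.Ioc (0:ℝ) 1, ENNReal.ofReal ((-1 : ℝ) ^ k * G S k x) ∂S.μ

open scoped Classical in
noncomputable def dIdx (S : MString) : ℕ∞ :=
  if BddBelow (S.m '' Set.Ioc (0:ℝ) 1) then 0
  else sInf {n : ℕ∞ | ∃ k : ℕ, n = (k : ℕ∞) ∧ 1 ≤ k ∧ intGdm S k < ⊤}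

noncomputable def phi (S : MString) (d : ℕ) (lam x : ℝ) : ℝ :=
  1 + (∑ k ∈ Finset.Icc 1 d, lam ^ k * G S k x)
    + ∑' k : ℕ, lam ^ (d + k + 1) * smIter S (k + 1) (G S d) x

noncomputable def c (S : MString) (d : ℕ) (lam : ℝ) : ℝ :=
  (phi S d lam 1 - g S lam 1) / psi S lam 1

noncomputable def Sd (S : MString) (d : ℕ) (x : ℝ) : ℝ :=
  sSup ((fun y => |mBul S (G S d) y|) '' Set.Icc 0 x)

end MString

/-!
On `(0, 1]` the function `m̃` is nonpositive and, by the layer-cake formula,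
`∫_{(0,1]} |m̃| = ∫_{(0,1]} y dm(y) < ∞`; so `G¹ = ∫₀ˣ m̃` is finite and continuous on `[0, ∞)`.
If `Gᵏ` is continuous on `[0, ∞)`, then `y ↦ ∫_{(y,1]} Gᵏ dm` is of bounded variation on `(0, x]`
and bounded by `C |m̃ y|` there, hence integrable; so `Gᵏ⁺¹` is again finite and continuous.
The signs alternate because `(-1)ᵏ Gᵏ` vanishes at `0` and is the primitive of a function that is
nonnegative on `(0, 1]`, namely `-m̃` for `k = 1` and `y ↦ ∫_{(y,1]} (-1)ᵏ⁻¹ Gᵏ⁻¹ dm` for `k ≥ 2`.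
-/

open scoped Interval

section Primitive

variable {μ : Measure ℝ} {f : ℝ → ℝ} {s : Set ℝ} {c : ℝ}

theorem monotoneOn_primitive_of_ae_nonneg (hs : s.OrdConnected)
    (hint : ∀ y ∈ s, IntervalIntegrable f μ c y) (hnn : 0 ≤ᵐ[μ.restrict s] f) :
    MonotoneOn (fun y => ∫ z in c..y, f z ∂μ) s := by
  intro y hy y' hy' hyy'
  have hpos : 0 ≤ ∫ z in y..y', f z ∂μ :=
    intervalIntegral.integral_nonneg_of_ae_restrict hyy'
      (ae_restrict_of_ae_restrict_of_subset (hs.out hy hy') hnn)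
  have hadd := intervalIntegral.integral_add_adjacent_intervals (hint y hy)
    ((hint y hy).symm.trans (hint y' hy'))
  dsimp only
  linarith

/-- A primitive with respect to an arbitrary measure is a difference of two monotone functions. -/
theorem aemeasurable_primitive {ν : Measure ℝ} (hs : s.OrdConnected)
    (hint : ∀ y ∈ s, IntervalIntegrable f μ c y) :
    AEMeasurable (fun y => ∫ z in c..y, f z ∂μ) (ν.restrict s) := by
  have hmono : ∀ g : ℝ → ℝ, 0 ≤ g → (∀ y ∈ s, IntervalIntegrable g μ c y) →
      AEMeasurable (fun y => ∫ z in c..y, g z ∂μ) (ν.restrict s) := fun g hg hgint =>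
    aemeasurable_restrict_of_monotoneOn hs.measurableSet
      (monotoneOn_primitive_of_ae_nonneg hs hgint (ae_of_all _ hg))
  have hpos : ∀ y ∈ s, IntervalIntegrable (fun z => max (f z) 0) μ c y :=
    fun y hy => ⟨(hint y hy).1.pos_part, (hint y hy).2.pos_part⟩
  have hneg : ∀ y ∈ s, IntervalIntegrable (fun z => max (-f z) 0) μ c y :=
    fun y hy => ⟨(hint y hy).1.neg_part, (hint y hy).2.neg_part⟩
  refine ((hmono (fun z => max (f z) 0) (fun z => le_max_right _ _) hpos).sub
    (hmono (fun z => max (-f z) 0) (fun z => le_max_right _ _) hneg)).congr ?_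
  refine (ae_restrict_iff' hs.measurableSet).2 (ae_of_all _ fun y hy => ?_)
  rw [Pi.sub_apply, ← intervalIntegral.integral_sub (hpos y hy) (hneg y hy)]
  simp only [max_zero_sub_max_neg_zero_eq_self]

theorem continuousOn_primitive_Ici [NullSingletonClass μ]
    (hf : ∀ x, 0 ≤ x → IntervalIntegrable f μ 0 x) :
    ContinuousOn (fun x => ∫ t in (0:ℝ)..x, f t ∂μ) (Ici 0) := by
  intro x (hx : 0 ≤ x)
  have hcont := intervalIntegral.continuousOn_primitive_interval' (hf (x + 1) (by linarith))
    left_mem_uIcc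
  rw [uIcc_of_le (by linarith)] at hcont
  refine (hcont x ⟨hx, by linarith⟩).mono_of_mem_nhdsWithin ?_
  exact mem_of_superset (inter_mem_nhdsWithin _ (Iio_mem_nhds (lt_add_one x)))
    fun y hy => ⟨hy.1, hy.2.le⟩

theorem ContinuousOn.integrableOn_Ioc_of_measure_lt_top {a b : ℝ}
    (hf : ContinuousOn f (Icc a b)) (hμ : μ (Ioc a b) < ⊤) : IntegrableOn f (Ioc a b) μ := by
  obtain ⟨C, hC⟩ := isCompact_Icc.exists_bound_of_continuousOn hf
  exact IntegrableOn.of_bound hμ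
    ((hf.mono Ioc_subset_Icc_self).aestronglyMeasurable measurableSet_Ioc) C
    (ae_restrict_of_forall_mem measurableSet_Ioc fun y hy => hC y (Ioc_subset_Icc_self hy))

end Primitive

namespace MString

variable (S : MString)

theorem m_le_m {x y : ℝ} (hx : 0 < x) (hxy : x ≤ y) : S.m x ≤ S.m y :=
  S.strict_mono.monotoneOn hx (hx.trans_le hxy) hxy

theorem mtilde_monotoneOn : MonotoneOn S.mtilde (Ioi 0) :=
  fun _ hx _ _ hxy => sub_le_sub_right (S.m_le_m hx hxy) _

theorem mtilde_nonpos {y : ℝ} (hy : y ∈ Ioc (0:ℝ) 1) : S.mtilde y ≤ 0 :=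
  sub_nonpos.2 (S.m_le_m hy.1 hy.2)

theorem measure_Ioc_lt_top_of_pos {a : ℝ} (ha : 0 < a) (b : ℝ) : S.μ (Ioc a b) < ⊤ := by
  rcases le_or_gt a b with h | h
  · rw [S.stieltjes a b ha h]
    exact ENNReal.ofReal_lt_top
  · simp [Ioc_eq_empty_of_le h.le]

theorem measureReal_uIoc_one {y : ℝ} (hy : 0 < y) : S.μ.real (Ι 1 y) = |S.mtilde y| := by
  rcases le_total y 1 with h | h
  · have hm := sub_nonneg.2 (S.m_le_m hy h)
    rw [uIoc_of_ge h, measureReal_def, S.stieltjes y 1 hy h, ENNReal.toReal_ofReal hm, mtilde,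
      abs_sub_comm, abs_of_nonneg hm]
  · have hm := sub_nonneg.2 (S.m_le_m one_pos h)
    rw [uIoc_of_le h, measureReal_def, S.stieltjes 1 y one_pos h, ENNReal.toReal_ofReal hm, mtilde,
      abs_of_nonneg hm]

/-- Layer cake: `∫_{(0,1]} (m 1 - m y) dy = ∫_{(0,1]} μ (y, 1] dy ≤ ∫_{(0,1]} z dμ(z)`. -/
theorem lintegral_m_one_sub_lt_top :
    ∫⁻ y in Ioc (0:ℝ) 1, ENNReal.ofReal (S.m 1 - S.m y) < ⊤ := by
  let ν := S.μ.restrict (Ioc (0:ℝ) 1)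
  have hlayer : ∫⁻ z, ENNReal.ofReal z ∂ν = ∫⁻ t in Ioi (0:ℝ), ν {z | t < z} :=
    lintegral_eq_lintegral_meas_lt ν
      (ae_restrict_of_forall_mem measurableSet_Ioc fun z hz => hz.1.le) aemeasurable_id
  have htail : ∀ y ∈ Ioc (0:ℝ) 1, ENNReal.ofReal (S.m 1 - S.m y) = ν {z | y < z} := by
    intro y hy
    have hν : ν {z | y < z} = S.μ (Ioi y ∩ Ioc 0 1) := Measure.restrict_apply measurableSet_Ioi
    rw [hν, inter_comm, Ioc_inter_Ioi, max_eq_right hy.1.le, S.stieltjes y 1 hy.1 hy.2]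
  calc ∫⁻ y in Ioc (0:ℝ) 1, ENNReal.ofReal (S.m 1 - S.m y)
      = ∫⁻ y in Ioc (0:ℝ) 1, ν {z | y < z} := setLIntegral_congr_fun measurableSet_Ioc htail
    _ ≤ ∫⁻ t in Ioi (0:ℝ), ν {z | t < z} := lintegral_mono_set fun y hy => hy.1
    _ = ∫⁻ z, ENNReal.ofReal z ∂ν := hlayer.symm
    _ < ⊤ := S.int_fin

theorem intervalIntegrable_mtilde_zero_one : IntervalIntegrable S.mtilde volume 0 1 := by
  rw [intervalIntegrable_iff_integrableOn_Ioc_of_le zero_le_one]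
  refine ⟨(aemeasurable_restrict_of_monotoneOn measurableSet_Ioc
    (S.mtilde_monotoneOn.mono Ioc_subset_Ioi_self)).aestronglyMeasurable, ?_⟩
  rw [hasFiniteIntegral_iff_norm]
  refine lt_of_eq_of_lt (setLIntegral_congr_fun measurableSet_Ioc fun y hy => ?_)
    S.lintegral_m_one_sub_lt_top
  rw [Real.norm_eq_abs, abs_of_nonpos (S.mtilde_nonpos hy), mtilde, neg_sub]

theorem intervalIntegrable_mtilde {x : ℝ} (hx : 0 ≤ x) :
    IntervalIntegrable S.mtilde volume 0 x := by
  rcases hx.eq_or_lt with rfl | hx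
  · exact IntervalIntegrable.refl
  · exact S.intervalIntegrable_mtilde_zero_one.trans (MonotoneOn.intervalIntegrable
      (S.mtilde_monotoneOn.mono fun y hy => (lt_min one_pos hx).trans_le hy.1))

theorem jInt_eq_neg_intervalIntegral (f : ℝ → ℝ) :
    S.jInt f = fun y => -∫ z in (1:ℝ)..y, f z ∂S.μ := by
  ext y
  rcases le_or_gt y 1 with h | h
  · rw [jInt, if_pos h, intervalIntegral.integral_symm, intervalIntegral.integral_of_le h,
      neg_neg]
  · rw [jInt, if_neg h.not_ge, intervalIntegral.integral_of_le h.le]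

variable {S}

theorem integrableOn_Ioc_of_continuousOn {f : ℝ → ℝ} (hf : ContinuousOn f (Ici 0)) {a : ℝ}
    (ha : 0 < a) (b : ℝ) : IntegrableOn f (Ioc a b) S.μ :=
  (hf.mono fun _ hy => ha.le.trans hy.1).integrableOn_Ioc_of_measure_lt_top
    (S.measure_Ioc_lt_top_of_pos ha b)

theorem intervalIntegrable_jInt {f : ℝ → ℝ} (hf : ContinuousOn f (Ici 0)) {x : ℝ}
    (hx : 0 ≤ x) :
    IntervalIntegrable (S.jInt f) volume 0 x := by
  have hint : ∀ y ∈ Ioc 0 x, IntervalIntegrable f S.μ 1 y := fun y hy =>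
    intervalIntegrable_iff.2 (integrableOn_Ioc_of_continuousOn hf (lt_min one_pos hy.1) _)
  obtain ⟨C, hC⟩ := isCompact_Icc.exists_bound_of_continuousOn
    (hf.mono (Icc_subset_Ici_self : Icc 0 (max 1 x) ⊆ Ici 0))
  rw [S.jInt_eq_neg_intervalIntegral]
  refine ((S.intervalIntegrable_mtilde hx).abs.const_mul C).mono_fun' ?_ ?_
  · rw [uIoc_of_le hx]
    exact (aemeasurable_primitive ordConnected_Ioc hint).neg.aestronglyMeasurable
  · rw [uIoc_of_le hx]
    refine ae_restrict_of_forall_mem measurableSet_Ioc fun y hy => ?_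
    dsimp only
    rw [norm_neg, intervalIntegral.norm_integral_eq_norm_integral_uIoc,
      ← S.measureReal_uIoc_one hy.1]
    refine norm_setIntegral_le_of_norm_le_const
      (S.measure_Ioc_lt_top_of_pos (lt_min one_pos hy.1) _) fun z hz => hC z ⟨?_, ?_⟩
    · exact (lt_min one_pos hy.1).le.trans hz.1.le
    · exact hz.2.trans (max_le_max le_rfl hy.2)

variable (S)

theorem G_apply_zero (k : ℕ) : S.G k 0 = 0 := by
  match k with
  | 0 => rfl
  | 1 => exact intervalIntegral.integral_same
  | k + 2 => exact neg_eq_zero.2 intervalIntegral.integral_same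

theorem continuousOn_G : ∀ k : ℕ, ContinuousOn (S.G (k + 1)) (Ici 0)
  | 0 => continuousOn_primitive_Ici fun _ hx => S.intervalIntegrable_mtilde hx
  | k + 1 =>
    (continuousOn_primitive_Ici fun _ hx => intervalIntegrable_jInt (continuousOn_G k) hx).neg

theorem neg_one_pow_mul_G_nonneg {k : ℕ}
    (h : MonotoneOn (fun x => (-1 : ℝ) ^ k * S.G k x) (Icc 0 1)) {x : ℝ}
    (hx : x ∈ Icc (0:ℝ) 1) :
    0 ≤ (-1 : ℝ) ^ k * S.G k x := by
  simpa [G_apply_zero] using h ⟨le_rfl, zero_le_one⟩ hx hx.1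

theorem monotoneOn_neg_one_pow_mul_G :
    ∀ k : ℕ, MonotoneOn (fun x => (-1 : ℝ) ^ (k + 1) * S.G (k + 1) x) (Icc 0 1)
  | 0 => by
    have hG : (fun x => (-1 : ℝ) ^ (0 + 1) * S.G (0 + 1) x)
        = fun x => ∫ y in (0:ℝ)..x, -S.mtilde y := by
      ext x
      rw [intervalIntegral.integral_neg, zero_add, pow_one, neg_one_mul]
      rfl
    rw [hG]
    refine monotoneOn_primitive_of_ae_nonneg ordConnected_Icc
      (fun y hy => (S.intervalIntegrable_mtilde hy.1).neg) ?_
    rw [Measure.restrict_congr_set Ioc_ae_eq_Icc.symm]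
    exact ae_restrict_of_forall_mem measurableSet_Ioc fun y hy =>
      neg_nonneg.2 (S.mtilde_nonpos hy)
  | k + 1 => by
    have hG : (fun x => (-1 : ℝ) ^ (k + 1 + 1) * S.G (k + 1 + 1) x)
        = fun x => ∫ y in (0:ℝ)..x, (-1 : ℝ) ^ (k + 1) * S.jInt (S.G (k + 1)) y := by
      ext x
      rw [intervalIntegral.integral_const_mul, pow_succ]
      change _ * -_ = _
      ring
    rw [hG]
    refine monotoneOn_primitive_of_ae_nonneg ordConnected_Icc
      (fun y hy => (intervalIntegrable_jInt (S.continuousOn_G k) hy.1).const_mul _)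
      (ae_restrict_of_forall_mem measurableSet_Icc fun y hy => ?_)
    dsimp only [Pi.zero_apply]
    rw [jInt, if_pos hy.2, ← integral_const_mul]
    exact setIntegral_nonneg measurableSet_Ioc fun z hz =>
      S.neg_one_pow_mul_G_nonneg (monotoneOn_neg_one_pow_mul_G k) ⟨hy.1.trans hz.1.le, hz.2⟩

end MString

theorem stmt2 (S : MString) :
    (∀ x : ℝ, 0 ≤ x → IntervalIntegrable (MString.mtilde S) MeasureTheory.volume 0 x) ∧
    (∀ k : ℕ, 1 ≤ k → ∀ a b : ℝ, 0 < a → IntegrableOn (MString.G S k) (Set.Ioc a b) S.μ) ∧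
    (∀ k : ℕ, 1 ≤ k → ∀ x : ℝ, 0 ≤ x →
      IntervalIntegrable (MString.jInt S (MString.G S k)) MeasureTheory.volume 0 x) ∧
    (∀ k : ℕ, 1 ≤ k → ∀ x ∈ Set.Icc (0:ℝ) 1, 0 ≤ (-1 : ℝ) ^ k * MString.G S k x) ∧
    (∀ k : ℕ, 1 ≤ k →
      MonotoneOn (fun x => (-1 : ℝ) ^ k * MString.G S k x) (Set.Icc (0:ℝ) 1)) := by
  have hG : ∀ k, 1 ≤ k → ContinuousOn (S.G k) (Ici 0) ∧
      MonotoneOn (fun x => (-1 : ℝ) ^ k * S.G k x) (Icc 0 1) := by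
    intro k hk
    obtain ⟨n, rfl⟩ := Nat.exists_eq_add_of_le' hk
    exact ⟨S.continuousOn_G n, S.monotoneOn_neg_one_pow_mul_G n⟩
  exact ⟨fun x hx => S.intervalIntegrable_mtilde hx,
    fun k hk a b ha => MString.integrableOn_Ioc_of_continuousOn (hG k hk).1 ha b,
    fun k hk x hx => MString.intervalIntegrable_jInt (hG k hk).1 hx,
    fun k hk x hx => S.neg_one_pow_mul_G_nonneg (hG k hk).2 hx,
    fun k hk => (hG k hk).2⟩
end

section
/- Let m ∈ 𝓜. Then for every integer k with 1 ≤ k ≤ d(m), lim_{x→0+} G^{k+1}_m(x)/G^k_m(x) = 0 (the ratio is well defined for small x > 0 since (−1)^k G^k_m > 0 on (0,1] when m is strictly increasing). -/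
open MeasureTheory Filter Topology Set
open scoped ENNReal NNReal

/-! Write `A k = (-1)^k G^k`, which on `[0, 1]` is the nonnegative function
`A (k+1) x = ∫_0^x ∫_(y,1] A k dm dy` with `A 0 = 1`. We show `A (k+1) = o(A k)` at `0+` by
induction.
For `k = 0` this is `A 1 x → 0`, since `∫_0^1 (m 1 - m y) dy = ∫_(0,1] x dm < ∞`.
If `A (k+1) ≤ ε A k` on `(0, δ]`, then `∫_(y,1] A (k+1) dm ≤ ε ∫_(y,1] A k dm + C`, hence
`A (k+2) x ≤ ε A (k+1) x + C x`. For `k < d(m)` the integral `∫_(0,1] A k dm` diverges, so the inner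
integral of `A k` blows up as `y → 0+`, i.e. `A (k+1) x / x → ∞`, and the term `C x` is absorbed.
Working in `ℝ≥0∞` keeps all of this free of integrability side conditions. -/

section TailIntegrals

variable {α : Type*}

def IsLittleOENNReal (l : Filter α) (f g : α → ℝ≥0∞) : Prop :=
  ∀ c : ℝ≥0, 0 < c → ∀ᶠ x in l, f x ≤ c * g x

theorem IsLittleOENNReal.toReal {l : Filter α} {f g : α → ℝ≥0∞} (h : IsLittleOENNReal l f g)
    (hg : ∀ᶠ x in l, g x ≠ ⊤) :
    (fun x => (f x).toReal) =o[l] (fun x => (g x).toReal) := by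
  refine Asymptotics.IsLittleO.of_bound fun c hc => ?_
  filter_upwards [h c.toNNReal (Real.toNNReal_pos.2 hc), hg] with x hfg hgx
  have h := ENNReal.toReal_mono (ENNReal.mul_ne_top ENNReal.coe_ne_top hgx) hfg
  rw [ENNReal.toReal_mul, ENNReal.coe_toReal, Real.coe_toNNReal _ hc.le] at h
  simpa only [Real.norm_of_nonneg ENNReal.toReal_nonneg] using h

theorem tendsto_measure_Ioc_nhdsGT (ν : Measure ℝ) (a b : ℝ) :
    Tendsto (fun y => ν (Ioc y b)) (𝓝[>] a) (𝓝 (ν (Ioc a b))) := by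
  have hanti : Antitone fun y => ν (Ioc y b) := fun _ _ h => measure_mono (Ioc_subset_Ioc_left h)
  convert hanti.tendsto_nhdsGT a using 2
  refine le_antisymm ?_ (sSup_le ?_)
  · have hmono : Monotone fun n : ℕ => Ioc (a + 1 / (n + 1)) b := fun m n hmn =>
      Ioc_subset_Ioc_left (by gcongr)
    have hunion : Ioc a b = ⋃ n : ℕ, Ioc (a + 1 / (n + 1)) b := by
      ext z
      simp only [mem_Ioc, mem_iUnion]
      constructor
      · rintro ⟨haz, hzb⟩
        obtain ⟨n, hn⟩ := exists_nat_one_div_lt (sub_pos.2 haz)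
        exact ⟨n, by linarith, hzb⟩
      · rintro ⟨n, hz, hzb⟩
        exact ⟨(lt_add_of_pos_right a (by positivity)).trans hz, hzb⟩
    rw [hunion, hmono.measure_iUnion]
    exact iSup_le fun n => le_sSup ⟨_, lt_add_of_pos_right a (by positivity), rfl⟩
  · rintro _ ⟨y, hy, rfl⟩
    exact measure_mono (Ioc_subset_Ioc_left (le_of_lt hy))

variable {μ : Measure ℝ} {u v : ℝ → ℝ≥0∞}

variable (μ) in
noncomputable def tailIntegral (u : ℝ → ℝ≥0∞) (y : ℝ) : ℝ≥0∞ := ∫⁻ z in Ioc y 1, u z ∂μ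

variable (μ) in
noncomputable def tailPrimitive (u : ℝ → ℝ≥0∞) (x : ℝ) : ℝ≥0∞ := ∫⁻ y in Ioc 0 x, tailIntegral μ u y

theorem tailIntegral_antitone : Antitone (tailIntegral μ u) :=
  fun _ _ h => lintegral_mono_set (Ioc_subset_Ioc_left h)

theorem tailPrimitive_mono : Monotone (tailPrimitive μ u) :=
  fun _ _ h => lintegral_mono_set (Ioc_subset_Ioc_right h)

theorem tailIntegral_le_of_monotone (hu : Monotone u) (y : ℝ) :
    tailIntegral μ u y ≤ u 1 * μ (Ioc y 1) :=
  (setLIntegral_mono' measurableSet_Ioc fun _ hz => hu hz.2).trans_eq (setLIntegral_const _ _)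

theorem tendsto_tailIntegral_nhdsGT_zero (hu : ∫⁻ z in Ioc 0 1, u z ∂μ = ⊤) :
    Tendsto (tailIntegral μ u) (𝓝[>] 0) (𝓝 ⊤) := by
  have h := tendsto_measure_Ioc_nhdsGT (μ.withDensity u) 0 1
  simp only [withDensity_apply _ measurableSet_Ioc, hu] at h
  exact h

theorem tendsto_tailPrimitive_nhdsGT_zero (hu : tailPrimitive μ u 1 ≠ ⊤) :
    Tendsto (tailPrimitive μ u) (𝓝[>] 0) (𝓝 0) := by
  have h := tendsto_measure_biInter_gt (μ := volume.withDensity (tailIntegral μ u))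
    (s := fun x => Ioc 0 x) (a := 0) (fun _ _ => measurableSet_Ioc.nullMeasurableSet)
    (fun _ _ _ hij => Ioc_subset_Ioc_right hij)
    ⟨1, one_pos, by rwa [withDensity_apply _ measurableSet_Ioc]⟩
  have hempty : (⋂ r > (0:ℝ), Ioc 0 r) = ∅ :=
    eq_empty_of_forall_notMem fun z hz => by
      have hz0 := (mem_iInter₂.1 hz 1 one_pos).1
      linarith [(mem_iInter₂.1 hz (z / 2) (half_pos hz0)).2]
  simp only [hempty, measure_empty, Function.comp_def,
    withDensity_apply _ measurableSet_Ioc] at h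
  exact h

theorem tailIntegral_le_of_le_on_Ioc (hv : Measurable v) {c : ℝ≥0} {δ : ℝ}
    (hvu : ∀ z ∈ Ioc 0 δ, v z ≤ c * u z) {y : ℝ} (hy : 0 ≤ y) :
    tailIntegral μ v y ≤ c * tailIntegral μ u y + tailIntegral μ v δ :=
  calc tailIntegral μ v y
      ≤ ∫⁻ z in Ioc y 1, (c * u z + (Ioi δ).indicator v z) ∂μ := by
        refine setLIntegral_mono' measurableSet_Ioc fun z hz => ?_
        by_cases hzδ : z ≤ δ
        · exact (hvu z ⟨hy.trans_lt hz.1, hzδ⟩).trans le_self_add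
        · rw [indicator_of_mem (mem_Ioi.2 (not_le.1 hzδ))]
          exact le_add_self
    _ = c * tailIntegral μ u y + ∫⁻ z in Ioi δ ∩ Ioc y 1, v z ∂μ := by
        rw [lintegral_add_right' _ (hv.indicator measurableSet_Ioi).aemeasurable,
          lintegral_const_mul' _ _ ENNReal.coe_ne_top, setLIntegral_indicator measurableSet_Ioi]
        rfl
    _ ≤ c * tailIntegral μ u y + tailIntegral μ v δ := by
        gcongr
        exact lintegral_mono_set fun z hz => ⟨hz.1, hz.2.2⟩

theorem tailPrimitive_le_of_tailIntegral_le {c : ℝ≥0} {C : ℝ≥0∞}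
    (h : ∀ y ≥ 0, tailIntegral μ v y ≤ c * tailIntegral μ u y + C) (x : ℝ) :
    tailPrimitive μ v x ≤ c * tailPrimitive μ u x + C * ENNReal.ofReal x :=
  calc tailPrimitive μ v x ≤ ∫⁻ y in Ioc 0 x, (c * tailIntegral μ u y + C) :=
        setLIntegral_mono' measurableSet_Ioc fun y hy => h y hy.1.le
    _ = c * tailPrimitive μ u x + C * ENNReal.ofReal x := by
        rw [lintegral_add_right' _ aemeasurable_const,
          lintegral_const_mul' _ _ ENNReal.coe_ne_top, setLIntegral_const, Real.volume_Ioc,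
          sub_zero]
        rfl

theorem mul_le_tailPrimitive {N : ℝ≥0∞} {δ x : ℝ} (h : ∀ y ∈ Ioc 0 δ, N ≤ tailIntegral μ u y)
    (hx : x ≤ δ) : N * ENNReal.ofReal x ≤ tailPrimitive μ u x :=
  calc N * ENNReal.ofReal x = ∫⁻ _ in Ioc 0 x, N := by
        rw [setLIntegral_const, Real.volume_Ioc, sub_zero]
    _ ≤ tailPrimitive μ u x :=
        setLIntegral_mono' measurableSet_Ioc fun y hy => h y ⟨hy.1, hy.2.trans hx⟩

theorem isLittleOENNReal_tailPrimitive (hv : Measurable v)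
    (hv_fin : ∀ y > 0, tailIntegral μ v y ≠ ⊤) (hu : ∫⁻ z in Ioc 0 1, u z ∂μ = ⊤)
    (hvu : IsLittleOENNReal (𝓝[>] 0) v u) :
    IsLittleOENNReal (𝓝[>] 0) (tailPrimitive μ v) (tailPrimitive μ u) := by
  intro c hc
  set c₂ : ℝ≥0 := c / 2
  have hc₂ : c₂ ≠ 0 := (half_pos hc).ne'
  obtain ⟨δ, hδ, hvδ⟩ := mem_nhdsGT_iff_exists_Ioc_subset.1 (hvu c₂ (half_pos hc))
  set C := tailIntegral μ v δ
  have hupper := tailPrimitive_le_of_tailIntegral_le fun y hy =>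
    tailIntegral_le_of_le_on_Ioc (μ := μ) hv hvδ hy
  -- the divergence of `∫ u dμ` makes `tailPrimitive μ u x` grow faster than any multiple of `x`
  obtain ⟨δ', hδ', hbig⟩ := mem_nhdsGT_iff_exists_Ioc_subset.1
    ((tendsto_tailIntegral_nhdsGT_zero hu).eventually_const_lt
      (ENNReal.div_lt_top (hv_fin δ hδ) (ENNReal.coe_ne_zero.2 hc₂)))
  filter_upwards [Ioo_mem_nhdsGT hδ'] with x hx
  calc tailPrimitive μ v x ≤ c₂ * tailPrimitive μ u x + C * ENNReal.ofReal x := hupper x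
    _ = c₂ * tailPrimitive μ u x + c₂ * (C / c₂ * ENNReal.ofReal x) := by
      rw [← mul_assoc, ENNReal.mul_div_cancel (ENNReal.coe_ne_zero.2 hc₂) ENNReal.coe_ne_top]
    _ ≤ c₂ * tailPrimitive μ u x + c₂ * tailPrimitive μ u x := by
      gcongr
      exact mul_le_tailPrimitive (fun y hy => (hbig hy).le) hx.2.le
    _ = c * tailPrimitive μ u x := by
      rw [← two_mul, ← mul_assoc]
      congr 1
      exact_mod_cast mul_div_cancel₀ c two_ne_zero

end TailIntegrals

namespace MString

variable (S : MString)

noncomputable def absG : ℕ → ℝ → ℝ≥0∞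
  | 0 => 1
  | k + 1 => tailPrimitive S.μ (absG k)

theorem absG_mono : ∀ k, Monotone (S.absG k)
  | 0 => monotone_const
  | _ + 1 => tailPrimitive_mono

theorem measure_Ioc_lt_top {y : ℝ} (hy : 0 < y) : S.μ (Ioc y 1) < ⊤ := by
  rcases le_total y 1 with h | h
  · rw [S.stieltjes y 1 hy h]
    exact ENNReal.ofReal_lt_top
  · simp [Ioc_eq_empty_of_le h]

theorem lintegral_measure_Ioc_lt_top : ∫⁻ y in Ioc 0 1, S.μ (Ioc y 1) < ⊤ := by
  set ν := S.μ.restrict (Ioc 0 1)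
  calc ∫⁻ y in Ioc 0 1, S.μ (Ioc y 1) ≤ ∫⁻ y in Ioc 0 1, ν {z | y < z} :=
        setLIntegral_mono' measurableSet_Ioc fun y hy => by
          rw [Measure.restrict_apply' measurableSet_Ioc]
          exact measure_mono fun z hz => ⟨hz.1, hy.1.trans hz.1, hz.2⟩
    _ ≤ ∫⁻ y in Ioi 0, ν {z | y < z} := lintegral_mono_set Ioc_subset_Ioi_self
    _ = ∫⁻ z, ENNReal.ofReal z ∂ν :=
        (lintegral_eq_lintegral_meas_lt ν
          (ae_restrict_of_forall_mem measurableSet_Ioc fun z hz => hz.1.le)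
          measurable_id.aemeasurable).symm
    _ < ⊤ := S.int_fin

theorem absG_lt_top : ∀ (k : ℕ) {x : ℝ}, x ≤ 1 → S.absG k x < ⊤
  | 0, _, _ => ENNReal.one_lt_top
  | k + 1, x, hx => by
    calc S.absG (k + 1) x ≤ ∫⁻ y in Ioc 0 1, S.absG k 1 * S.μ (Ioc y 1) :=
          (S.absG_mono (k + 1) hx).trans
            (setLIntegral_mono' measurableSet_Ioc fun y _ =>
              tailIntegral_le_of_monotone (S.absG_mono k) y)
      _ = S.absG k 1 * ∫⁻ y in Ioc 0 1, S.μ (Ioc y 1) :=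
          lintegral_const_mul' _ _ (absG_lt_top k le_rfl).ne
      _ < ⊤ := ENNReal.mul_lt_top (absG_lt_top k le_rfl) S.lintegral_measure_Ioc_lt_top

theorem tailIntegral_absG_lt_top (k : ℕ) {y : ℝ} (hy : 0 < y) :
    tailIntegral S.μ (S.absG k) y < ⊤ :=
  (tailIntegral_le_of_monotone (S.absG_mono k) y).trans_lt
    (ENNReal.mul_lt_top (S.absG_lt_top k le_rfl) (S.measure_Ioc_lt_top hy))

theorem integral_toReal_absG (k : ℕ) (y : ℝ) :
    ∫ z in Ioc y 1, (S.absG k z).toReal ∂S.μ = (tailIntegral S.μ (S.absG k) y).toReal :=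
  integral_toReal (S.absG_mono k).measurable.aemeasurable
    ((ae_restrict_mem measurableSet_Ioc).mono fun _ hz => S.absG_lt_top k hz.2)

theorem integral_toReal_tailIntegral_absG (k : ℕ) (x : ℝ) :
    ∫ y in Ioc 0 x, (tailIntegral S.μ (S.absG k) y).toReal = (S.absG (k + 1) x).toReal :=
  integral_toReal tailIntegral_antitone.measurable.aemeasurable
    ((ae_restrict_mem measurableSet_Ioc).mono fun _ hy => S.tailIntegral_absG_lt_top k hy.1)

theorem G_eq : ∀ (k : ℕ) {x : ℝ}, 0 ≤ x → x ≤ 1 →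
    S.G (k + 1) x = (-1) ^ (k + 1) * (S.absG (k + 1) x).toReal
  | 0, x, hx₀, hx₁ => by
    have hm : ∀ y ∈ Ioc 0 x, S.mtilde y = -(tailIntegral S.μ (S.absG 0) y).toReal := by
      intro y hy
      have hy₁ := hy.2.trans hx₁
      rw [tailIntegral, absG, Pi.one_def, setLIntegral_one, S.stieltjes y 1 hy.1 hy₁,
        ENNReal.toReal_ofReal
          (sub_nonneg.2 (S.strict_mono.monotoneOn hy.1 (mem_Ioi.2 one_pos) hy₁)), mtilde]
      ring
    dsimp only [G]
    rw [intervalIntegral.integral_of_le hx₀, setIntegral_congr_fun measurableSet_Ioc hm,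
      integral_neg, integral_toReal_tailIntegral_absG]
    ring
  | k + 1, x, hx₀, hx₁ => by
    have hj : ∀ y ∈ Ioc 0 x,
        S.jInt (S.G (k + 1)) y = (-1) ^ (k + 1) * (tailIntegral S.μ (S.absG (k + 1)) y).toReal := by
      intro y hy
      rw [jInt, if_pos (hy.2.trans hx₁),
        setIntegral_congr_fun measurableSet_Ioc fun z hz => G_eq k (hy.1.trans hz.1).le hz.2,
        integral_const_mul, integral_toReal_absG]
    dsimp only [G]
    rw [intervalIntegral.integral_of_le hx₀, setIntegral_congr_fun measurableSet_Ioc hj,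
      integral_const_mul, integral_toReal_tailIntegral_absG]
    ring

theorem intGdm_succ (k : ℕ) : S.intGdm (k + 1) = ∫⁻ z in Ioc 0 1, S.absG (k + 1) z ∂S.μ := by
  refine setLIntegral_congr_fun measurableSet_Ioc fun z hz => ?_
  rw [S.G_eq k hz.1.le hz.2, ← mul_assoc, ← mul_pow, neg_one_mul, neg_neg, one_pow, one_mul,
    ENNReal.ofReal_toReal (S.absG_lt_top (k + 1) hz.2).ne]

theorem measure_Ioc_zero_one_eq_top (hm : ¬BddBelow (S.m '' Ioc 0 1)) :
    S.μ (Ioc 0 1) = ⊤ := by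
  by_contra hfin
  refine hm ⟨S.m 1 - (S.μ (Ioc 0 1)).toReal, ?_⟩
  rintro _ ⟨y, hy, rfl⟩
  have h : ENNReal.ofReal (S.m 1 - S.m y) ≤ S.μ (Ioc 0 1) :=
    S.stieltjes y 1 hy.1 hy.2 ▸ measure_mono (Ioc_subset_Ioc_left hy.1.le)
  linarith [(ENNReal.ofReal_le_iff_le_toReal hfin).1 h]

theorem lintegral_absG_eq_top_of_lt_dIdx (hm : ¬BddBelow (S.m '' Ioc 0 1)) {k j : ℕ}
    (hk : (k : ℕ∞) ≤ S.dIdx) (hj : j < k) : ∫⁻ z in Ioc 0 1, S.absG j z ∂S.μ = ⊤ := by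
  cases j with
  | zero =>
    rw [absG, Pi.one_def, setLIntegral_one]
    exact S.measure_Ioc_zero_one_eq_top hm
  | succ i =>
    by_contra hfin
    have hd : S.dIdx ≤ (i + 1 : ℕ) := by
      rw [dIdx, if_neg hm]
      exact sInf_le ⟨i + 1, rfl, Nat.le_add_left 1 i, S.intGdm_succ i ▸ lt_top_iff_ne_top.2 hfin⟩
    have : k ≤ i + 1 := by exact_mod_cast hk.trans hd
    omega

theorem isLittleOENNReal_absG_succ :
    ∀ k : ℕ, (∀ j < k, ∫⁻ z in Ioc 0 1, S.absG j z ∂S.μ = ⊤) →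
      IsLittleOENNReal (𝓝[>] 0) (S.absG (k + 1)) (S.absG k)
  | 0, _ => fun c hc => by
    filter_upwards [(tendsto_tailPrimitive_nhdsGT_zero (S.absG_lt_top 1 le_rfl).ne
      ).eventually_lt_const (by exact_mod_cast hc : (0 : ℝ≥0∞) < c)] with x hx
    simpa only [absG, Pi.one_apply, mul_one] using hx.le
  | k + 1, hdiv =>
    isLittleOENNReal_tailPrimitive (S.absG_mono (k + 1)).measurable
      (fun _ hy => (S.tailIntegral_absG_lt_top (k + 1) hy).ne) (hdiv k k.lt_succ_self)
      (isLittleOENNReal_absG_succ k fun j hj => hdiv j (hj.trans k.lt_succ_self))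

theorem isLittleO_G_succ (k : ℕ) (hdiv : ∀ j < k + 1, ∫⁻ z in Ioc 0 1, S.absG j z ∂S.μ = ⊤) :
    S.G (k + 2) =o[𝓝[>] 0] S.G (k + 1) := by
  have hfin : ∀ᶠ x in 𝓝[>] 0, S.absG (k + 1) x ≠ ⊤ := by
    filter_upwards [Ioo_mem_nhdsGT one_pos] with x hx using (S.absG_lt_top _ hx.2.le).ne
  have h := (S.isLittleOENNReal_absG_succ (k + 1) hdiv).toReal hfin
  refine Asymptotics.isLittleO_abs_abs.1 (h.congr' ?_ ?_) <;>
  · filter_upwards [Ioo_mem_nhdsGT one_pos] with x hx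
    rw [S.G_eq _ hx.1.le hx.2.le, abs_mul, abs_pow, abs_neg, abs_one, one_pow, one_mul,
      abs_of_nonneg ENNReal.toReal_nonneg]

end MString

theorem stmt9 (S : MString) (k : ℕ) (hk1 : 1 ≤ k) (hk2 : (k : ℕ∞) ≤ MString.dIdx S) :
    Tendsto (fun x => MString.G S (k + 1) x / MString.G S k x)
      (nhdsWithin 0 (Set.Ioi 0)) (nhds 0) := by
  have hm : ¬BddBelow (S.m '' Ioc 0 1) := fun hm => by
    rw [MString.dIdx, if_pos hm] at hk2
    exact absurd (by exact_mod_cast hk2 : k ≤ 0) (by omega)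
  obtain ⟨i, rfl⟩ := Nat.exists_eq_add_of_le' hk1
  exact (S.isLittleO_G_succ i fun j hj =>
    S.lintegral_absG_eq_top_of_lt_dIdx hm hk2 hj).tendsto_div_nhds_zero
end

section
/- Let m_n ∈ 𝓜 (n ∈ ℕ) be a sequence such that m_n(x) → 0 as n → ∞ for every x > 0 and ∫_{(0,1]} y dm_n(y) → 0 as n → ∞. Then for every integer k ≥ 1 and every x₀ > 0, sup_{z ∈ [0,x₀]} |G^k_{m_n}(z)| → 0 as n → ∞. -/
open MeasureTheory Filter Topology Set
open scoped ENNReal NNReal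

/-!
On `[0, b]` with `b ≥ 1` one has `∫₀^b |m̃| ≤ C_b := ∫_{(0,1]} y dm + (b - 1)(m(b) - m(1))`: on `(0, 1]`
this is Fubini (`|m̃(y)| = dm((y, 1])`), on `[1, b]` it is monotonicity. If `|f| ≤ M` on `(0, b]`, then
`|∫_{(y,1]} f dm| ≤ M |m̃(y)|`, so by induction `|G^k_m| ≤ C_b ^ k` on `[0, b]`. Under the hypotheses
`C_b → 0` along the sequence, hence so does `C_b ^ k` for `k ≥ 1`.
-/

namespace MString

variable (S : MString)

lemma m_le_m_s10 {a c : ℝ} (ha : 0 < a) (hac : a ≤ c) : S.m a ≤ S.m c :=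
  S.strict_mono.monotoneOn (mem_Ioi.2 ha) (mem_Ioi.2 (ha.trans_le hac)) hac

lemma measureReal_Ioc {a c : ℝ} (ha : 0 < a) (hac : a ≤ c) :
    S.μ.real (Ioc a c) = S.m c - S.m a := by
  rw [measureReal_def, S.stieltjes a c ha hac,
    ENNReal.toReal_ofReal (sub_nonneg.2 (S.m_le_m_s10 ha hac))]

lemma abs_mtilde_of_le_one {y : ℝ} (hy : 0 < y) (hy1 : y ≤ 1) :
    |mtilde S y| = S.μ.real (Ioc y 1) := by
  rw [S.measureReal_Ioc hy hy1, mtilde, abs_of_nonpos (sub_nonpos.2 (S.m_le_m_s10 hy hy1)), neg_sub]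

lemma abs_mtilde_of_one_le {y : ℝ} (hy : 1 ≤ y) : |mtilde S y| = S.μ.real (Ioc 1 y) := by
  rw [S.measureReal_Ioc one_pos hy, mtilde, abs_of_nonneg (sub_nonneg.2 (S.m_le_m_s10 one_pos hy))]

lemma ofReal_F_one : ENNReal.ofReal (S.F 1) = ∫⁻ x in Ioc (0:ℝ) 1, ENNReal.ofReal x ∂S.μ := by
  have hF : S.F 1 = (∫⁻ x in Ioc (0:ℝ) 1, ENNReal.ofReal x ∂S.μ).toReal :=
    integral_eq_lintegral_of_nonneg_ae
      ((ae_restrict_iff' measurableSet_Ioc).2 (Eventually.of_forall fun _ hx => hx.1.le))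
      aestronglyMeasurable_id
  rw [hF, ENNReal.ofReal_toReal S.int_fin.ne]

lemma lintegral_abs_mtilde_Ioc_zero_one_le :
    ∫⁻ y in Ioc (0:ℝ) 1, ENNReal.ofReal |mtilde S y| ≤ ENNReal.ofReal (S.F 1) := by
  have hlevel : ∀ y ∈ Ioc (0:ℝ) 1,
      ENNReal.ofReal |mtilde S y| = S.μ.restrict (Ioc 0 1) (Ioi y) := by
    intro y hy
    have hset : Ioi y ∩ Ioc 0 1 = Ioc y 1 :=
      ext fun x => ⟨fun h => ⟨h.1, h.2.2⟩, fun h => ⟨h.1, hy.1.trans h.1, h.2⟩⟩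
    rw [S.abs_mtilde_of_le_one hy.1 hy.2, measureReal_def, Measure.restrict_apply measurableSet_Ioi,
      hset, ENNReal.ofReal_toReal (by rw [S.stieltjes y 1 hy.1 hy.2]; exact ENNReal.ofReal_ne_top)]
  have hnonneg : 0 ≤ᵐ[S.μ.restrict (Ioc 0 1)] (fun x : ℝ => x) :=
    (ae_restrict_iff' measurableSet_Ioc).2 (Eventually.of_forall fun _ hx => hx.1.le)
  calc ∫⁻ y in Ioc (0:ℝ) 1, ENNReal.ofReal |mtilde S y|
      = ∫⁻ y in Ioc (0:ℝ) 1, S.μ.restrict (Ioc 0 1) (Ioi y) :=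
        setLIntegral_congr_fun measurableSet_Ioc hlevel
    _ ≤ ∫⁻ y in Ioi (0:ℝ), S.μ.restrict (Ioc 0 1) (Ioi y) := lintegral_mono_set Ioc_subset_Ioi_self
    _ = ∫⁻ x in Ioc 0 1, ENNReal.ofReal x ∂S.μ :=
        (lintegral_eq_lintegral_meas_lt _ hnonneg aemeasurable_id).symm
    _ = ENNReal.ofReal (S.F 1) := S.ofReal_F_one.symm

noncomputable def mtildeBound (b : ℝ) : ℝ := S.F 1 + (b - 1) * (S.m b - S.m 1)

lemma F_one_nonneg : 0 ≤ S.F 1 := setIntegral_nonneg measurableSet_Ioc fun _ hy => hy.1.le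

lemma mtildeBound_nonneg {b : ℝ} (hb : 1 ≤ b) : 0 ≤ S.mtildeBound b :=
  add_nonneg S.F_one_nonneg
    (mul_nonneg (sub_nonneg.2 hb) (sub_nonneg.2 (S.m_le_m_s10 one_pos hb)))

lemma lintegral_abs_mtilde_le {b z : ℝ} (hb : 1 ≤ b) (hz : z ≤ b) :
    ∫⁻ y in Ioc (0:ℝ) z, ENNReal.ofReal |mtilde S y| ≤ ENNReal.ofReal (S.mtildeBound b) := by
  have htail : ∀ y ∈ Ioc (1:ℝ) b, ENNReal.ofReal |mtilde S y| ≤ ENNReal.ofReal (S.m b - S.m 1) := by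
    intro y hy
    rw [S.abs_mtilde_of_one_le hy.1.le, S.measureReal_Ioc one_pos hy.1.le]
    exact ENNReal.ofReal_le_ofReal (sub_le_sub_right (S.m_le_m_s10 (one_pos.trans hy.1) hy.2) _)
  have hsplit : Ioc (0:ℝ) z ⊆ Ioc 0 1 ∪ Ioc 1 b := fun y hy =>
    (le_or_gt y 1).imp (fun h => ⟨hy.1, h⟩) (fun h => ⟨h, hy.2.trans hz⟩)
  calc ∫⁻ y in Ioc (0:ℝ) z, ENNReal.ofReal |mtilde S y|
      ≤ ∫⁻ y in Ioc 0 1 ∪ Ioc 1 b, ENNReal.ofReal |mtilde S y| := lintegral_mono_set hsplit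
    _ ≤ (∫⁻ y in Ioc 0 1, ENNReal.ofReal |mtilde S y|) +
          ∫⁻ y in Ioc 1 b, ENNReal.ofReal |mtilde S y| :=
          lintegral_union_le (fun y => ENNReal.ofReal |mtilde S y|) _ _
    _ ≤ ENNReal.ofReal (S.F 1) + ∫⁻ _ in Ioc 1 b, ENNReal.ofReal (S.m b - S.m 1) :=
        add_le_add S.lintegral_abs_mtilde_Ioc_zero_one_le (setLIntegral_mono' measurableSet_Ioc htail)
    _ = ENNReal.ofReal (S.mtildeBound b) := by
        rw [setLIntegral_const, Real.volume_Ioc, ← ENNReal.ofReal_mul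
          (sub_nonneg.2 (S.m_le_m_s10 one_pos hb)), mtildeBound, ENNReal.ofReal_add S.F_one_nonneg
          (mul_nonneg (sub_nonneg.2 hb) (sub_nonneg.2 (S.m_le_m_s10 one_pos hb))),
          mul_comm (S.m b - S.m 1)]

lemma abs_integral_le_of_abs_le_mul_abs_mtilde {h : ℝ → ℝ} {M b z : ℝ} (hM : 0 ≤ M)
    (hb : 1 ≤ b) (hz : z ∈ Icc 0 b) (hh : ∀ y ∈ Ioc 0 z, |h y| ≤ M * |mtilde S y|) :
    |∫ y in (0:ℝ)..z, h y| ≤ M * S.mtildeBound b := by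
  have hlint : ∫⁻ y in Ioc 0 z, ENNReal.ofReal ‖h y‖ ≤ ENNReal.ofReal (M * S.mtildeBound b) :=
    calc ∫⁻ y in Ioc 0 z, ENNReal.ofReal ‖h y‖
        ≤ ∫⁻ y in Ioc 0 z, ENNReal.ofReal M * ENNReal.ofReal |mtilde S y| :=
          setLIntegral_mono' measurableSet_Ioc fun y hy => by
            rw [← ENNReal.ofReal_mul hM]; exact ENNReal.ofReal_le_ofReal (hh y hy)
      _ = ENNReal.ofReal M * ∫⁻ y in Ioc 0 z, ENNReal.ofReal |mtilde S y| :=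
          lintegral_const_mul' _ _ ENNReal.ofReal_ne_top
      _ ≤ ENNReal.ofReal M * ENNReal.ofReal (S.mtildeBound b) := by
          gcongr; exact S.lintegral_abs_mtilde_le hb hz.2
      _ = ENNReal.ofReal (M * S.mtildeBound b) := (ENNReal.ofReal_mul hM).symm
  rw [intervalIntegral.integral_of_le hz.1, ← Real.norm_eq_abs]
  calc ‖∫ y in Ioc 0 z, h y‖ ≤ (∫⁻ y in Ioc 0 z, ENNReal.ofReal ‖h y‖).toReal :=
        norm_integral_le_lintegral_norm _
    _ ≤ M * S.mtildeBound b := ENNReal.toReal_le_of_le_ofReal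
        (mul_nonneg hM (S.mtildeBound_nonneg hb)) hlint

lemma abs_jInt_le {f : ℝ → ℝ} {M b y : ℝ} (hb : 1 ≤ b) (hf : ∀ z ∈ Ioc 0 b, |f z| ≤ M)
    (hy : y ∈ Ioc 0 b) : |jInt S f y| ≤ M * |mtilde S y| := by
  have hbound : ∀ s ⊆ Ioc 0 b, S.μ s < ⊤ → ‖∫ z in s, f z ∂S.μ‖ ≤ M * S.μ.real s :=
    fun s hs hfin => norm_setIntegral_le_of_norm_le_const hfin fun z hz => hf z (hs hz)
  rw [jInt]
  split_ifs with hy1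
  · rw [S.abs_mtilde_of_le_one hy.1 hy1]
    exact hbound _ (fun z hz => ⟨hy.1.trans hz.1, hz.2.trans hb⟩)
      (by rw [S.stieltjes y 1 hy.1 hy1]; exact ENNReal.ofReal_lt_top)
  · replace hy1 := not_le.1 hy1
    rw [abs_neg, S.abs_mtilde_of_one_le hy1.le]
    exact hbound _ (fun z hz => ⟨one_pos.trans hz.1, hz.2.trans hy.2⟩)
      (by rw [S.stieltjes 1 y one_pos hy1.le]; exact ENNReal.ofReal_lt_top)

theorem abs_G_le {b : ℝ} (hb : 1 ≤ b) : ∀ k : ℕ, ∀ z ∈ Icc 0 b, |G S k z| ≤ S.mtildeBound b ^ k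
  | 0, _, _ => by simp [G]
  | 1, z, hz => by
      simpa [G] using S.abs_integral_le_of_abs_le_mul_abs_mtilde zero_le_one hb hz
        fun y _ => (one_mul _).symm.le
  | k + 2, z, hz => by
      have hjInt : ∀ y ∈ Ioc 0 z, |jInt S (G S (k + 1)) y| ≤
          S.mtildeBound b ^ (k + 1) * |mtilde S y| := fun y hy =>
        S.abs_jInt_le hb (fun w hw => abs_G_le hb (k + 1) w (Ioc_subset_Icc_self hw))
          ⟨hy.1, hy.2.trans hz.2⟩
      rw [G, abs_neg, pow_succ]
      exact S.abs_integral_le_of_abs_le_mul_abs_mtilde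
        (pow_nonneg (S.mtildeBound_nonneg hb) _) hb hz hjInt

end MString

theorem stmt10 (Sn : ℕ → MString)
    (hm : ∀ x : ℝ, 0 < x → Tendsto (fun n => (Sn n).m x) atTop (nhds 0))
    (hint : Tendsto (fun n => MString.F (Sn n) 1) atTop (nhds 0)) :
    ∀ k : ℕ, 1 ≤ k → ∀ x₀ : ℝ, 0 < x₀ →
      Tendsto (fun n => sSup ((fun z => |MString.G (Sn n) k z|) '' Set.Icc 0 x₀))
        atTop (nhds 0) := by
  intro k hk x₀ _
  set b := max x₀ 1
  have hb : (1:ℝ) ≤ b := le_max_right _ _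
  have hbound : Tendsto (fun n => (Sn n).mtildeBound b ^ k) atTop (𝓝 0) := by
    have hC : Tendsto (fun n => (Sn n).mtildeBound b) atTop (𝓝 0) := by
      simpa [MString.mtildeBound] using
        hint.add (((hm b (one_pos.trans_le hb)).sub (hm 1 one_pos)).const_mul (b - 1))
    simpa [zero_pow (Nat.one_le_iff_ne_zero.1 hk)] using hC.pow k
  refine tendsto_of_tendsto_of_tendsto_of_le_of_le tendsto_const_nhds hbound
    (fun n => Real.sSup_nonneg (by rintro _ ⟨z, -, rfl⟩; exact abs_nonneg _))
    (fun n => Real.sSup_le ?_ (pow_nonneg ((Sn n).mtildeBound_nonneg hb) k))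
  rintro _ ⟨z, hz, rfl⟩
  exact (Sn n).abs_G_le hb k z ⟨hz.1, hz.2.trans (le_max_left _ _)⟩
end
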